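/- arXiv:1704.06984 — 2 statements merged into one kernel-verified Lean document; each statement's English description precedes it below -/
import Mathlib

section
/- Let n ≥ 1 and let K ⊂ ℝⁿ be a nonempty compact convex set. Then the following two statements are equivalent: (a) for every v ∈ K, max_{1≤i≤n} vᵢ > 0; (b) there exists p ∈ ℝⁿ with pᵢ > 0 for every i such that Σᵢ pᵢ vᵢ > 0 for every v ∈ K. -/
/-- Minimax principle: for a nonempty compact convex `K ⊆ ℝⁿ`, every `v ∈ K` has
`max_i v_i > 0` if and only if there is a strictly positive weight vector `p` with
`∑ i, p i * v i > 0` for all `v ∈ K`. -/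
theorem stmt_7 (n : ℕ) (hn : 0 < n) (K : Set (Fin n → ℝ))
    (hne : K.Nonempty) (hcomp : IsCompact K) (hconv : Convex ℝ K) :
    (∀ v ∈ K, 0 < Finset.univ.sup' ⟨⟨0, hn⟩, Finset.mem_univ _⟩ v) ↔
      (∃ p : Fin n → ℝ, (∀ i, 0 < p i) ∧ ∀ v ∈ K, 0 < ∑ i, p i * v i) := by
  constructor
  · intro h
    set C : Set (Fin n → ℝ) := {v | ∀ i, v i ≤ 0} with hC
    have hCclosed : IsClosed C := by
      have hEq : C = ⋂ i, (fun v : Fin n → ℝ => v i) ⁻¹' Set.Iic 0 := by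
        ext v; simp [hC]
      rw [hEq]
      exact isClosed_iInter fun i => isClosed_Iic.preimage (continuous_apply i)
    have hCconv : Convex ℝ C := by
      intro x hx y hy a b ha hb _ i
      have h1 := hx i; have h2 := hy i
      have : a * x i + b * y i ≤ 0 := by nlinarith
      simpa using this
    have hdisj : Disjoint C K := by
      rw [Set.disjoint_left]
      intro v hvC hvK
      have hsup := h v hvK
      have : Finset.univ.sup' ⟨⟨0, hn⟩, Finset.mem_univ _⟩ v ≤ 0 :=
        Finset.sup'_le _ _ fun i _ => hvC i
      linarith
    obtain ⟨f, u, w, hfC, huw, hfK⟩ :=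
      geometric_hahn_banach_closed_compact hCconv hCclosed hconv hcomp hdisj
    have h0C : (0 : Fin n → ℝ) ∈ C := fun i => le_refl 0
    have hu0 : 0 < u := by have := hfC 0 h0C; simpa using this
    have hw0 : 0 < w := hu0.trans huw
    -- f ≤ 0 on C (cone argument)
    have hfC0 : ∀ b ∈ C, f b ≤ 0 := by
      intro b hb
      by_contra hpos
      push_neg at hpos
      set t : ℝ := (u + 1) / f b with ht
      have htpos : 0 ≤ t := div_nonneg (by linarith) hpos.le
      have htb : t • b ∈ C := fun i =>
        mul_nonpos_of_nonneg_of_nonpos htpos (hb i)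
      have := hfC (t • b) htb
      rw [map_smul, smul_eq_mul, ht, div_mul_cancel₀ _ (ne_of_gt hpos)] at this
      linarith
    -- coordinates of f
    have hfi : ∀ i, 0 ≤ f (Pi.single i 1) := by
      intro i
      have hmem : (-Pi.single i (1 : ℝ)) ∈ C := by
        intro j
        by_cases hij : j = i
        · subst hij; simp
        · simp [Pi.single_apply, hij]
      have := hfC0 _ hmem
      rw [map_neg] at this; linarith
    have hsingle : ∀ (i : Fin n) (c : ℝ), (Pi.single i c : Fin n → ℝ) = c • (Pi.single i 1 : Fin n → ℝ) := by
      intro i c; ext j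
      simp [Pi.single_apply, mul_ite]
    have hfv : ∀ v : Fin n → ℝ, f v = ∑ i, v i * f (Pi.single i 1) := by
      intro v
      conv_lhs => rw [← Finset.univ_sum_single v]
      rw [map_sum]
      refine Finset.sum_congr rfl fun i _ => ?_
      rw [hsingle i (v i), map_smul, smul_eq_mul]
    -- lower bound on ∑ v i over K
    have hcont : Continuous fun v : Fin n → ℝ => ∑ i, v i :=
      continuous_finset_sum _ fun i _ => continuous_apply i
    obtain ⟨v₀, hv₀K, hv₀min⟩ := hcomp.exists_isMinOn hne hcont.continuousOn
    obtain ⟨ε, hεpos, hεv₀⟩ : ∃ ε : ℝ, 0 < ε ∧ -(w / 2) ≤ ε * ∑ i, v₀ i := by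
      set M : ℝ := |∑ i, v₀ i| + 1 with hM
      have hMpos : 0 < M := by positivity
      refine ⟨w / (2 * M), by positivity, ?_⟩
      have h3 : -M ≤ ∑ i, v₀ i := by
        rw [hM]; linarith [neg_abs_le (∑ i, v₀ i)]
      have h5 : w / (2 * M) * (-M) ≤ w / (2 * M) * ∑ i, v₀ i :=
        mul_le_mul_of_nonneg_left h3 (by positivity)
      have h6 : w / (2 * M) * (-M) = -(w / 2) := by
        field_simp
      linarith
    refine ⟨fun i => f (Pi.single i 1) + ε, fun i => ?_, ?_⟩
    · have := hfi i
      show 0 < f (Pi.single i 1) + ε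
      linarith
    intro v hv
    have hsum : ∑ i, (f (Pi.single i 1) + ε) * v i
        = f v + ε * ∑ i, v i := by
      rw [hfv v, Finset.mul_sum, ← Finset.sum_add_distrib]
      congr 1; ext i; ring
    rw [hsum]
    have h1 : w < f v := hfK v hv
    have h2 : ∑ i, v₀ i ≤ ∑ i, v i := hv₀min hv
    have h5 : ε * ∑ i, v₀ i ≤ ε * ∑ i, v i := mul_le_mul_of_nonneg_left h2 hεpos.le
    linarith
  · rintro ⟨p, hp, hsum⟩ v hv
    by_contra hs
    push_neg at hs
    have hvi : ∀ i, v i ≤ 0 := fun i =>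
      le_trans (Finset.le_sup' v (Finset.mem_univ i)) hs
    have : (∑ i, p i * v i) ≤ 0 :=
      Finset.sum_nonpos fun i _ => mul_nonpos_of_nonneg_of_nonpos (hp i).le (hvi i)
    linarith [hsum v hv]
end

section
/- Let n ≥ 1, let c ∈ ℝⁿ with cᵢ > 0 for all i, and let p ∈ ℝⁿ with pᵢ > 0 for all i and Σᵢ pᵢ < 1. Define V : (0,∞)ⁿ → (0,∞) by V(x) = (1 + Σᵢ cᵢ xᵢ) / ∏ᵢ xᵢ^{pᵢ}. Then lim_{m→∞} inf{ V(x) : x ∈ (0,∞)ⁿ and xᵢ > m or xᵢ < 1/m for some i } = ∞; equivalently, for every M > 0 there exists m > 1 such that V(x) ≥ M whenever some coordinate satisfies xᵢ > m or xᵢ < 1/m. -/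
/-- Properness of the Lyapunov function `V(x) = (1 + Σ cᵢxᵢ)/∏ xᵢ^{pᵢ}` on `(0,∞)ⁿ`:
for every `M > 0` there is `m > 1` such that `V(x) ≥ M` whenever some coordinate
satisfies `xᵢ > m` or `xᵢ < 1/m`. -/
theorem stmt_10 (n : ℕ) (hn : 1 ≤ n) (c p : Fin n → ℝ)
    (hc : ∀ i, 0 < c i) (hp : ∀ i, 0 < p i) (hps : ∑ i, p i < 1) :
    ∀ M : ℝ, 0 < M → ∃ m : ℝ, 1 < m ∧
      ∀ x : Fin n → ℝ, (∀ i, 0 < x i) → (∃ i, m < x i ∨ x i < 1 / m) →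
        M ≤ (1 + ∑ i, c i * x i) / ∏ i, x i ^ p i := by
  intro M hM
  set σ := ∑ i, p i with hσdef
  have hσ0 : 0 ≤ σ := Finset.sum_nonneg fun i _ => (hp i).le
  have h1σ : 0 < 1 - σ := by linarith
  have hne : (Finset.univ : Finset (Fin n)).Nonempty := ⟨⟨0, hn⟩, Finset.mem_univ _⟩
  set c' : Fin n → ℝ := fun j => min 1 (c j) with hc'def
  have hc'pos : ∀ j, 0 < c' j := fun j => lt_min one_pos (hc j)
  have hc'le1 : ∀ j, c' j ≤ 1 := fun j => min_le_left _ _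
  set Q := ∏ j, (c' j) ^ (p j) with hQdef
  have hQ : 0 < Q := Finset.prod_pos fun j _ => Real.rpow_pos_of_pos (hc'pos j) _
  obtain ⟨i0, -, hcm⟩ := Finset.exists_mem_eq_inf' hne c
  set cm := Finset.univ.inf' hne c with hcmdef
  have hcm0 : 0 < cm := by rw [hcm]; exact hc i0
  have hcmle : ∀ j, cm ≤ c j := fun j => Finset.inf'_le _ (Finset.mem_univ j)
  obtain ⟨i1, -, hpm⟩ := Finset.exists_mem_eq_inf' hne p
  set pm := Finset.univ.inf' hne p with hpmdef
  have hpm0 : 0 < pm := by rw [hpm]; exact hp i1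
  have hpmle : ∀ j, pm ≤ p j := fun j => Finset.inf'_le _ (Finset.mem_univ j)
  set A := max 1 (M / Q) with hAdef
  have hA1 : (1:ℝ) ≤ A := le_max_left _ _
  have hA0 : (0:ℝ) ≤ A := by linarith
  have hMQ : M / Q ≤ A := le_max_right _ _
  set m := max 2 (max (A ^ pm⁻¹) (A ^ (1-σ)⁻¹ / cm)) with hmdef
  have hm2 : (2:ℝ) ≤ m := le_max_left _ _
  have hm1 : (1:ℝ) < m := by linarith
  have hm0 : (0:ℝ) < m := by linarith
  refine ⟨m, hm1, ?_⟩
  intro x hx hex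
  set S := ∑ j, c j * x j with hSdef
  have hS0 : 0 ≤ S := Finset.sum_nonneg fun j _ => (mul_pos (hc j) (hx j)).le
  have hS1 : (1:ℝ) ≤ 1 + S := by linarith
  have hS1' : (0:ℝ) < 1 + S := by linarith
  -- per-coordinate bound on x j
  have hxle : ∀ j, x j ≤ (1 + S) / c' j := by
    intro j
    rw [le_div_iff₀ (hc'pos j)]
    have h1 : x j * c' j ≤ c j * x j := by
      have := min_le_right 1 (c j)
      nlinarith [(hx j).le]
    have h2 : c j * x j ≤ S := by
      refine Finset.single_le_sum (fun k _ => (mul_pos (hc k) (hx k)).le) (Finset.mem_univ j)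
    linarith
  have key : ∀ j, x j ^ p j ≤ ((1 + S) / c' j) ^ p j := fun j =>
    Real.rpow_le_rpow (hx j).le (hxle j) (hp j).le
  have keyone : ∀ j, (1:ℝ) ≤ ((1 + S) / c' j) ^ p j := by
    intro j
    apply Real.one_le_rpow ?_ (hp j).le
    rw [le_div_iff₀ (hc'pos j)]
    nlinarith [hc'le1 j]
  -- product identity
  have hprodid : ∏ j, ((1 + S) / c' j) ^ p j = (1 + S) ^ σ / Q := by
    have h1 : ∀ j ∈ Finset.univ, ((1 + S) / c' j) ^ p j = (1 + S) ^ p j / (c' j) ^ p j :=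
      fun j _ => Real.div_rpow hS1'.le (hc'pos j).le (p j)
    rw [Finset.prod_congr rfl h1, Finset.prod_div_distrib, hσdef,
      ← Real.rpow_sum_of_pos hS1', hQdef]
  have hD0 : 0 < ∏ j, x j ^ p j :=
    Finset.prod_pos fun j _ => Real.rpow_pos_of_pos (hx j) _
  -- power facts about m
  have hmpm : A ≤ m ^ pm := by
    have h1 : A ^ pm⁻¹ ≤ m := le_trans (le_max_left _ _) (le_max_right _ _)
    calc A = (A ^ pm⁻¹) ^ pm := (Real.rpow_inv_rpow hA0 hpm0.ne').symm
      _ ≤ m ^ pm := Real.rpow_le_rpow (Real.rpow_nonneg hA0 _) h1 hpm0.le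
  have hcmm : A ≤ (cm * m) ^ (1 - σ) := by
    have h1 : A ^ (1-σ)⁻¹ / cm ≤ m := le_trans (le_max_right _ _) (le_max_right _ _)
    have h2 : A ^ (1-σ)⁻¹ ≤ cm * m := by
      rw [div_le_iff₀ hcm0] at h1; linarith [h1]
    calc A = (A ^ (1-σ)⁻¹) ^ (1-σ) := (Real.rpow_inv_rpow hA0 h1σ.ne').symm
      _ ≤ (cm * m) ^ (1-σ) := Real.rpow_le_rpow (Real.rpow_nonneg hA0 _) h2 h1σ.le
  rw [le_div_iff₀ hD0]
  obtain ⟨i, hi | hi⟩ := hex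
  · -- large coordinate
    have hSbig : cm * m ≤ 1 + S := by
      have : c i * x i ≤ S := Finset.single_le_sum
        (fun k _ => (mul_pos (hc k) (hx k)).le) (Finset.mem_univ i)
      nlinarith [hcmle i, hcm0, hm0, hx i]
    have hpow : A ≤ (1 + S) ^ (1 - σ) :=
      hcmm.trans (Real.rpow_le_rpow (by positivity) hSbig h1σ.le)
    have hDle : ∏ j, x j ^ p j ≤ (1 + S) ^ σ / Q := by
      rw [← hprodid]
      exact Finset.prod_le_prod (fun j _ => (Real.rpow_pos_of_pos (hx j) _).le)
        (fun j _ => key j)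
    calc M * ∏ j, x j ^ p j ≤ M * ((1 + S) ^ σ / Q) := by
          exact mul_le_mul_of_nonneg_left hDle hM.le
      _ = (M / Q) * (1 + S) ^ σ := by ring
      _ ≤ (1 + S) ^ (1 - σ) * (1 + S) ^ σ := by
          have : M / Q ≤ (1 + S) ^ (1-σ) := hMQ.trans hpow
          exact mul_le_mul_of_nonneg_right this (Real.rpow_nonneg hS1'.le _)
      _ = 1 + S := by
          rw [← Real.rpow_add hS1']; norm_num
  · -- small coordinate
    have hxi : x i ^ p i ≤ (1 / m) ^ p i :=
      Real.rpow_le_rpow (hx i).le hi.le (hp i).le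
    have hDle : ∏ j, x j ^ p j ≤ (1 / m) ^ p i * ((1 + S) ^ σ / Q) := by
      rw [← hprodid, ← Finset.mul_prod_erase Finset.univ _ (Finset.mem_univ i)]
      refine mul_le_mul hxi ?_ ?_ (Real.rpow_nonneg (by positivity) _)
      · refine le_trans (Finset.prod_le_prod (fun j _ => (Real.rpow_pos_of_pos (hx j) _).le)
          (fun j _ => key j)) ?_
        have hrest : 0 ≤ ∏ j ∈ Finset.univ.erase i, ((1 + S) / c' j) ^ p j :=
          Finset.prod_nonneg fun j _ =>
            Real.rpow_nonneg (div_pos hS1' (hc'pos j)).le _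
        calc ∏ j ∈ Finset.univ.erase i, ((1 + S) / c' j) ^ p j
            ≤ ((1 + S) / c' i) ^ p i * ∏ j ∈ Finset.univ.erase i, ((1 + S) / c' j) ^ p j :=
              le_mul_of_one_le_left hrest (keyone i)
          _ = ∏ j, ((1 + S) / c' j) ^ p j :=
              Finset.mul_prod_erase Finset.univ (fun j => ((1 + S) / c' j) ^ p j)
                (Finset.mem_univ i)
      · exact Finset.prod_pos (fun j _ => Real.rpow_pos_of_pos (hx j) _) |>.le
    have hmpi : A ≤ m ^ p i := by
      refine hmpm.trans (Real.rpow_le_rpow_of_exponent_le hm1.le (hpmle i))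
    have hinv : (1 / m) ^ p i = (m ^ p i)⁻¹ := by
      rw [one_div, Real.inv_rpow hm0.le]
    have hmpi0 : 0 < m ^ p i := Real.rpow_pos_of_pos hm0 _
    have hone : (M / Q) * (1 / m) ^ p i ≤ 1 := by
      rw [hinv]
      calc (M / Q) * (m ^ p i)⁻¹ ≤ (m ^ p i) * (m ^ p i)⁻¹ :=
            mul_le_mul_of_nonneg_right (hMQ.trans hmpi) (inv_nonneg.2 hmpi0.le)
        _ = 1 := mul_inv_cancel₀ hmpi0.ne' 
    have hpow1 : (1:ℝ) ≤ (1 + S) ^ (1 - σ) := Real.one_le_rpow hS1 h1σ.le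
    calc M * ∏ j, x j ^ p j ≤ M * ((1 / m) ^ p i * ((1 + S) ^ σ / Q)) :=
          mul_le_mul_of_nonneg_left hDle hM.le
      _ = ((M / Q) * (1 / m) ^ p i) * (1 + S) ^ σ := by ring
      _ ≤ 1 * ((1 + S) ^ (1 - σ) * (1 + S) ^ σ) := by
          refine mul_le_mul hone ?_ (Real.rpow_nonneg hS1'.le _) zero_le_one
          calc (1 + S) ^ σ = 1 * (1 + S) ^ σ := (one_mul _).symm
            _ ≤ (1 + S) ^ (1-σ) * (1 + S) ^ σ :=
              mul_le_mul_of_nonneg_right hpow1 (Real.rpow_nonneg hS1'.le _)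
      _ = 1 + S := by
          rw [one_mul, ← Real.rpow_add hS1']; norm_num
end
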